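/- arXiv:alg-geom/9711008 — 7 statements merged into one kernel-verified Lean document; each statement's English description precedes it below -/
import Mathlib

section
/- Let $K_1 \supseteq K_2 \supseteq \cdots$ be an infinite decreasing sequence of nonempty constructible subsets of a complex algebraic variety $V$ (equivalently, of a Noetherian topological space whose closed irreducible subsets have generic behavior as in schemes of finite type over $\mathbb{C}$). Then $\bigcap_{i=1}^{\infty} K_i \neq \emptyset$. -/
/-!
In a Noetherian space every open set is quasi-compact, so locally closed sets, and hence finite
unions of them, are closed in the constructible topology. For a quasi-compact, quasi-separated,
sober space such as a Noetherian scheme this topology is compact (Stacks 0901), so Cantor's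
intersection theorem applies.
-/

open AlgebraicGeometry Topology TopologicalSpace

variable {X : Type*} [TopologicalSpace X]

lemma IsLocallyClosed.isClosed_constructibleTopology [NoetherianSpace X] {s : Set X}
    (hs : IsLocallyClosed s) : IsClosed[constructibleTopology X] s := by
  obtain ⟨U, Z, hU, hZ, rfl⟩ := hs
  have hUc : IsOpen[constructibleTopology X] Uᶜ :=
    IsCompact.isOpen_constructibleTopology_of_isClosed
      (by simpa using NoetherianSpace.isCompact U) hU.isClosed_compl
  have hZc : IsOpen[constructibleTopology X] Zᶜ :=
    (NoetherianSpace.isCompact Zᶜ).isOpen_constructibleTopology_of_isOpen hZ.isOpen_compl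
  exact @IsClosed.inter X U Z (constructibleTopology X)
    (@isOpen_compl_iff X U (constructibleTopology X) |>.1 hUc)
    (@isOpen_compl_iff X Z (constructibleTopology X) |>.1 hZc)

theorem nonempty_iInter_of_isClosed_constructibleTopology [CompactSpace X] [QuasiSober X]
    [PrespectralSpace X] [QuasiSeparatedSpace X] (K : ℕ → Set X)
    (hK : ∀ i, IsClosed[constructibleTopology X] (K i)) (hne : ∀ i, (K i).Nonempty)
    (hmono : ∀ i, K (i + 1) ⊆ K i) : (⋂ i, K i).Nonempty := by
  have hK' (i : ℕ) : IsClosed (WithTopology.ofTopology ⁻¹' K i :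
      Set (WithConstructibleTopology X)) :=
    WithTopology.isClosed_iff _ |>.2 (hK i)
  obtain ⟨x, hx⟩ := IsCompact.nonempty_iInter_of_sequence_nonempty_isCompact_isClosed
    (fun i ↦ WithTopology.ofTopology ⁻¹' K i)
    (fun i ↦ Set.preimage_mono (hmono i))
    (fun i ↦ (hne i).preimage (WithTopology.ofTopology_surjective _))
    (hK' 0).isCompact hK'
  exact ⟨x.ofTopology, by simpa using hx⟩

/-- A decreasing sequence of nonempty constructible subsets (finite unions of
locally closed sets) of a complex algebraic variety (a scheme of finite type
over `ℂ`) has nonempty intersection. -/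
theorem stmt1 (V : Scheme) (f : V ⟶ Spec (CommRingCat.of ℂ))
    [LocallyOfFiniteType f] [QuasiCompact f]
    (K : ℕ → Set V)
    (hconstr : ∀ i, ∃ S : Finset (Set V),
      (∀ s ∈ S, IsLocallyClosed s) ∧ K i = ⋃ s ∈ S, s)
    (hne : ∀ i, (K i).Nonempty)
    (hmono : ∀ i, K (i + 1) ⊆ K i) :
    (⋂ i, K i).Nonempty := by
  have : IsLocallyNoetherian V := LocallyOfFiniteType.isLocallyNoetherian f
  have : CompactSpace V := QuasiCompact.compactSpace_of_compactSpace f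
  have : IsNoetherian V := ⟨⟩
  refine nonempty_iInter_of_isClosed_constructibleTopology K (fun i ↦ ?_) hne hmono
  obtain ⟨S, hS, hKS⟩ := hconstr i
  rw [hKS]
  exact @isClosed_biUnion_finset _ _ (constructibleTopology V) _ _
    fun s hs ↦ IsLocallyClosed.isClosed_constructibleTopology (hS s hs)
end

section
/- Let $X_0$ be a smooth projective variety of dimension $d-1$ with $E$-polynomial $E(X_0;u,v)$, and let $X$ be the cone over $X_0$ with respect to an ample line bundle $L$ satisfying $L^{\otimes k} \cong K_{X_0}^{-l}$. Then the stringy E-function of $X$ computed from the blow-up resolution $Y = \mathbb{P}(\mathcal{O}_{X_0}\oplus L) \to X$ with discrepancy $a = k/l - 1$ is $E_{st}(X;u,v) = E(X_0;u,v)\Big(uv + \frac{uv-1}{(uv)^{k/l}-1}\Big) = \frac{(uv)^{k/l+1}-1}{(uv)^{k/l}-1}\, E(X_0;u,v)$; in particular its limit as $u,v \to 1$ equals $\frac{k+l}{k}\, e(X_0)$. -/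
open Filter Topology

namespace Real

lemma rpow_ne_one_of_ne_one {t a : ℝ} (ht : 0 ≤ t) (ht1 : t ≠ 1) (ha : a ≠ 0) : t ^ a ≠ 1 := by
  rw [← one_rpow a, Ne, rpow_left_inj ht zero_le_one ha]
  exact ht1

lemma add_sub_one_div_rpow_sub_one {t a : ℝ} (ht : t ≠ 0) (hta : t ^ a ≠ 1) :
    t + (t - 1) / (t ^ a - 1) = (t ^ (a + 1) - 1) / (t ^ a - 1) := by
  have hden : t ^ a - 1 ≠ 0 := sub_ne_zero.mpr hta
  rw [rpow_add_one ht]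
  field_simp
  ring

lemma tendsto_sub_one_div_rpow_sub_one {a : ℝ} (ha : a ≠ 0) :
    Tendsto (fun t : ℝ => (t - 1) / (t ^ a - 1)) (𝓝[≠] 1) (𝓝 a⁻¹) := by
  have hderiv : HasDerivAt (fun t : ℝ => t ^ a) a 1 := by
    simpa using hasDerivAt_rpow_const (x := 1) (p := a) (Or.inl one_ne_zero)
  refine ((hasDerivAt_iff_tendsto_slope.mp hderiv).inv₀ ha).congr fun t => ?_
  simp [slope_def_field, inv_div]

end Real

/-- Stringy E-function of the cone over a smooth projective Fano `X₀` with
`L^⊗k ≅ K_{X₀}^{-l}`, computed from the `ℙ¹`-bundle resolution with discrepancy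
`k/l - 1`: writing `P t` for `E(X₀;u,v)` as a function of `t = uv`,
`E_st = P(t)·(t + (t-1)/(t^{k/l}-1)) = (t^{k/l+1}-1)/(t^{k/l}-1)·P(t)`, and its
limit as `t → 1` is `(k+l)/k · e(X₀)` where `e(X₀) = P 1`. -/
theorem stmt6 (k l : ℕ) (hk : 0 < k) (hl : 0 < l)
    (P : ℝ → ℝ) (hP : ContinuousAt P 1) :
    (∀ t : ℝ, 0 < t → t ≠ 1 →
      P t * (t + (t - 1) / (t ^ ((k : ℝ) / l) - 1))
        = ((t ^ ((k : ℝ) / l + 1) - 1) / (t ^ ((k : ℝ) / l) - 1)) * P t) ∧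
    Tendsto (fun t : ℝ => P t * (t + (t - 1) / (t ^ ((k : ℝ) / l) - 1)))
      (nhdsWithin 1 (Set.Ioi 0 \ {1}))
      (nhds (((k : ℝ) + l) / k * P 1)) := by
  have hk' : (k : ℝ) ≠ 0 := Nat.cast_ne_zero.mpr hk.ne'
  have hl' : (l : ℝ) ≠ 0 := Nat.cast_ne_zero.mpr hl.ne'
  have ha : (k : ℝ) / l ≠ 0 := div_ne_zero hk' hl'
  refine ⟨fun t ht ht1 => ?_, ?_⟩
  · rw [Real.add_sub_one_div_rpow_sub_one ht.ne' (Real.rpow_ne_one_of_ne_one ht.le ht1 ha),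
      mul_comm]
  · have hfilter : 𝓝[Set.Ioi 0 \ {1}] (1 : ℝ) ≤ 𝓝[≠] 1 :=
      nhdsWithin_mono 1 (Set.sdiff_subset_compl _ _)
    have hlim := (hP.tendsto.mono_left nhdsWithin_le_nhds).mul
      ((tendsto_id.mono_left nhdsWithin_le_nhds).add
        ((Real.tendsto_sub_one_div_rpow_sub_one ha).mono_left hfilter))
    rwa [show P 1 * (1 + ((k : ℝ) / l)⁻¹) = ((k : ℝ) + l) / k * P 1 by field_simp] at hlim
end

section
/- Let $d \geq 2$ and let $P(t) = \frac{(1+t^{(d-1)/2})(t^{(d+1)/2}-1)}{t-1}$ if $d-1$ is even, and $P(t) = \frac{t^d-1}{t-1}$ if $d-1$ is odd (the E-polynomial of a smooth quadric of dimension $d-1$ evaluated at $t = uv$). Then the rational function $E_{st}(t) = \frac{t^d - 1}{t^{d-1}-1}\, P(t)$ is a polynomial in $t$ if and only if $d \leq 3$; and $\lim_{t\to 1} E_{st}(t)$ equals $\frac{d(d+1)}{d-1}$ if $d-1$ is even and $\frac{d^2}{d-1}$ if $d-1$ is odd, which is not an integer for $d \geq 4$. -/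
/-!
For `t > 0`, `t ≠ 1`, write `[n]_t = 1 + t + ⋯ + t^(n-1)`. Then `E_st(t) = [d]_t [b]_t / [c]_t`
with `(b, c) = (m + 1, m)` when `d = 2m + 1` and `(b, c) = (d, d - 1)` when `d` is even; in both
cases `d ≡ b ≡ 1 (mod c)`, and `c = 1` exactly when `d ≤ 3`. For `c ≥ 2` a primitive `c`-th root
of unity is a root of `[c]` but not of `[d][b]`, so `E_st` is not a polynomial. The limit at
`t = 1` is `d b / c`, and `c ∣ d b ≡ 1` forces `c = 1`.
-/

open Filter Polynomial Set Topology

noncomputable def qInt {R : Type*} [Semiring R] (n : ℕ) : R[X] := ∑ i ∈ Finset.range n, X ^ i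

section qInt

variable {R : Type*}

@[simp]
theorem eval_qInt [CommSemiring R] (n : ℕ) (x : R) :
    (qInt n : R[X]).eval x = ∑ i ∈ Finset.range n, x ^ i :=
  eval_geom_sum

@[simp]
theorem qInt_one [Semiring R] : (qInt 1 : R[X]) = 1 := by
  simp [qInt]

theorem eval_qInt_mul_sub_one [CommRing R] (n : ℕ) (x : R) :
    (qInt n : R[X]).eval x * (x - 1) = x ^ n - 1 := by
  rw [eval_qInt, geom_sum_mul]

theorem eval_qInt_pos {x : ℝ} (hx : 0 < x) {n : ℕ} (hn : 0 < n) : 0 < (qInt n : ℝ[X]).eval x := by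
  rw [eval_qInt]
  exact Finset.sum_pos (fun i _ => pow_pos hx i) (Finset.nonempty_range_iff.mpr hn.ne')

theorem aeval_qInt_ne_zero [CommRing R] {K : Type*} [CommRing K] [IsDomain K] [Algebra R K]
    {ζ : K} {c n : ℕ} (hζ : IsPrimitiveRoot ζ c) (hn : ¬ c ∣ n) : aeval ζ (qInt n : R[X]) ≠ 0 := by
  intro h
  simp only [qInt, map_sum, map_pow, aeval_X] at h
  apply hn
  rw [← hζ.pow_eq_one_iff_dvd, ← sub_eq_zero, ← geom_sum_mul, h, zero_mul]

theorem aeval_qInt_self [CommRing R] {K : Type*} [CommRing K] [IsDomain K] [Algebra R K]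
    {ζ : K} {c : ℕ} (hζ : IsPrimitiveRoot ζ c) (hc : 1 < c) : aeval ζ (qInt c : R[X]) = 0 := by
  simpa [qInt] using hζ.geom_sum_eq_zero hc

theorem qInt_not_dvd_mul [CommRing R] {K : Type*} [CommRing K] [IsDomain K] [Algebra R K]
    {ζ : K} {a b c : ℕ} (hζ : IsPrimitiveRoot ζ c) (hc : 1 < c) (ha : ¬ c ∣ a) (hb : ¬ c ∣ b) :
    ¬ (qInt c : R[X]) ∣ qInt a * qInt b := by
  rintro ⟨r, hr⟩
  have := congrArg (aeval ζ) hr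
  rw [map_mul, map_mul, aeval_qInt_self hζ hc, zero_mul] at this
  exact mul_ne_zero (aeval_qInt_ne_zero hζ ha) (aeval_qInt_ne_zero hζ hb) this

theorem qInt_dvd_mul_iff [CommRing R] [Algebra R ℂ] {a b c : ℕ} (hc : 0 < c)
    (ha : a ≡ 1 [MOD c]) (hb : b ≡ 1 [MOD c]) :
    (qInt c : R[X]) ∣ qInt a * qInt b ↔ c = 1 := by
  refine ⟨fun h => ?_, fun h => by simp [h]⟩
  by_contra hc1
  have hc2 : 1 < c := by omega
  have not_dvd : ∀ n, n ≡ 1 [MOD c] → ¬ c ∣ n := fun n hn hdvd =>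
    hc1 (Nat.dvd_one.mp ((hn.dvd_iff dvd_rfl).mp hdvd))
  exact qInt_not_dvd_mul (Complex.isPrimitiveRoot_exp c hc.ne') hc2 (not_dvd a ha) (not_dvd b hb) h

end qInt

theorem exists_eqOn_eval_iff_dvd {K : Type*} [Field K] {f : K → K} {p q : K[X]} {s : Set K}
    (hs : s.Infinite) (hq : ∀ x ∈ s, q.eval x ≠ 0) (hf : EqOn f (fun x => p.eval x / q.eval x) s) :
    (∃ r : K[X], EqOn f r.eval s) ↔ q ∣ p := by
  constructor
  · rintro ⟨r, hr⟩
    refine ⟨r, eq_of_infinite_eval_eq _ _ (hs.mono fun x hx => ?_)⟩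
    have := (hf hx).symm.trans (hr hx)
    rw [div_eq_iff (hq x hx)] at this
    simp [this, mul_comm]
  · rintro ⟨r, rfl⟩
    exact ⟨r, fun x hx => by simp [hf hx, mul_div_cancel_left₀ _ (hq x hx)]⟩

theorem tendsto_nhdsWithin_of_eqOn_div {K : Type*} [Field K] [TopologicalSpace K]
    [IsTopologicalRing K] [ContinuousInv₀ K] {f : K → K} {p q : K[X]} {s : Set K} {x : K}
    (hq : q.eval x ≠ 0) (hf : EqOn f (fun x => p.eval x / q.eval x) s) :
    Tendsto f (𝓝[s] x) (𝓝 (p.eval x / q.eval x)) :=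
  tendsto_nhdsWithin_congr (fun _ hy => (hf hy).symm) <| tendsto_nhdsWithin_of_tendsto_nhds <|
    (p.continuousAt.div q.continuousAt hq).tendsto

theorem natCast_mul_div_ne_intCast {a b c : ℕ} (hc : 1 < c) (ha : a ≡ 1 [MOD c])
    (hb : b ≡ 1 [MOD c]) (n : ℤ) : (a * b / c : ℝ) ≠ n := by
  intro h
  have hdvd : c ∣ a * b := by
    rw [← Int.natCast_dvd_natCast]
    refine ⟨n, ?_⟩
    rw [div_eq_iff (by positivity)] at h
    exact_mod_cast (by linarith : ((a : ℝ) * b) = c * n)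
  have := Nat.dvd_one.mp (((ha.mul hb).dvd_iff dvd_rfl).mp (by simpa using hdvd))
  omega

theorem pow_sub_one_div_mul_eq_qInt {t : ℝ} (ht : 0 < t) (ht1 : t ≠ 1) {d : ℕ} (hd : 2 ≤ d) :
    (t ^ d - 1) / (t ^ (d - 1) - 1) * ((t ^ d - 1) / (t - 1)) =
      (qInt d * qInt d : ℝ[X]).eval t / (qInt (d - 1) : ℝ[X]).eval t := by
  have := (eval_qInt_pos ht (by omega : 0 < d - 1)).ne'
  have := sub_ne_zero.mpr ht1
  simp only [← eval_qInt_mul_sub_one, eval_mul]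
  field_simp

theorem pow_sub_one_div_mul_quadric_eq_qInt {t : ℝ} (ht : 0 < t) (ht1 : t ≠ 1) {m : ℕ}
    (hm : 0 < m) :
    (t ^ (2 * m + 1) - 1) / (t ^ (2 * m) - 1) * ((1 + t ^ m) * (t ^ (m + 1) - 1) / (t - 1)) =
      (qInt (2 * m + 1) * qInt (m + 1) : ℝ[X]).eval t / (qInt m : ℝ[X]).eval t := by
  have := (eval_qInt_pos ht hm).ne'
  have := sub_ne_zero.mpr ht1
  have : 1 + t ^ m ≠ 0 := by positivity
  have h2m : t ^ (2 * m) - 1 = (1 + t ^ m) * ((qInt m : ℝ[X]).eval t * (t - 1)) := by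
    rw [eval_qInt_mul_sub_one]; ring
  rw [h2m]
  simp only [← eval_qInt_mul_sub_one, eval_mul]
  field_simp

theorem stringyE_exists_qInt_ratio (d : ℕ) (hd : 2 ≤ d) (P Est : ℝ → ℝ)
    (hP : ∀ t : ℝ, 0 < t → t ≠ 1 → P t =
      if Even (d - 1) then
        (1 + t ^ (((d : ℝ) - 1) / 2)) * (t ^ (((d : ℝ) + 1) / 2) - 1) / (t - 1)
      else (t ^ d - 1) / (t - 1))
    (hEst : ∀ t : ℝ, 0 < t → t ≠ 1 →
      Est t = ((t ^ d - 1) / (t ^ (d - 1) - 1)) * P t) :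
    ∃ b c : ℕ, 0 < c ∧ d ≡ 1 [MOD c] ∧ b ≡ 1 [MOD c] ∧ (c = 1 ↔ d ≤ 3) ∧
      (if Even (d - 1) then ((d : ℝ) * (d + 1)) / (d - 1) else ((d : ℝ) ^ 2) / (d - 1)) =
        d * b / c ∧
      EqOn Est (fun t => (qInt d * qInt b : ℝ[X]).eval t / (qInt c : ℝ[X]).eval t)
        (Ioi 0 \ {1}) := by
  by_cases hpar : Even (d - 1)
  · obtain ⟨m, hm⟩ := hpar
    obtain rfl : d = 2 * m + 1 := by omega
    have hm0 : 0 < m := by omega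
    refine ⟨m + 1, m, hm0, ?_, ?_, by omega, ?_, fun t ⟨ht, ht1⟩ => ?_⟩
    · simp [Nat.ModEq]
    · simp [Nat.ModEq]
    · rw [if_pos ⟨m, hm⟩]
      have : (m : ℝ) ≠ 0 := by positivity
      push_cast
      field_simp
      ring
    · have ht1 : t ≠ 1 := ht1
      have hlow : ((↑(2 * m + 1) : ℝ) - 1) / 2 = (m : ℕ) := by push_cast; ring
      have hhigh : ((↑(2 * m + 1) : ℝ) + 1) / 2 = (m + 1 : ℕ) := by push_cast; ring
      rw [hEst t ht ht1, hP t ht ht1, if_pos ⟨m, hm⟩, hlow, hhigh, Real.rpow_natCast,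
        Real.rpow_natCast, Nat.add_sub_cancel]
      exact pow_sub_one_div_mul_quadric_eq_qInt ht ht1 hm0
  · obtain ⟨k, hk⟩ := Nat.not_even_iff_odd.mp hpar
    refine ⟨d, d - 1, by omega, ?_, ?_, by omega, ?_, fun t ⟨ht, ht1⟩ => ?_⟩
    · exact ((Nat.modEq_iff_dvd' (by omega)).mpr dvd_rfl).symm
    · exact ((Nat.modEq_iff_dvd' (by omega)).mpr dvd_rfl).symm
    · rw [if_neg hpar, Nat.cast_sub (by omega)]
      ring
    · have ht1 : t ≠ 1 := ht1
      rw [hEst t ht ht1, hP t ht ht1, if_neg hpar, pow_sub_one_div_mul_eq_qInt ht ht1 hd]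

/-- Stringy E-function of the cone over a smooth quadric of dimension `d-1`
(as a function of `t = uv`): `E_st(t) = (t^d-1)/(t^{d-1}-1) · P(t)` where `P` is
the E-polynomial of the quadric. It is a polynomial in `t` iff `d ≤ 3`; its limit
at `t → 1` is `d(d+1)/(d-1)` (`d-1` even) resp. `d²/(d-1)` (`d-1` odd), which is
not an integer for `d ≥ 4`. -/
theorem stmt7 (d : ℕ) (hd : 2 ≤ d) (P Est : ℝ → ℝ)
    (hP : ∀ t : ℝ, 0 < t → t ≠ 1 → P t =
      if Even (d - 1) then
        (1 + t ^ (((d : ℝ) - 1) / 2)) * (t ^ (((d : ℝ) + 1) / 2) - 1) / (t - 1)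
      else (t ^ d - 1) / (t - 1))
    (hEst : ∀ t : ℝ, 0 < t → t ≠ 1 →
      Est t = ((t ^ d - 1) / (t ^ (d - 1) - 1)) * P t) :
    ((∃ p : Polynomial ℝ, ∀ t : ℝ, 0 < t → t ≠ 1 → Est t = p.eval t) ↔ d ≤ 3) ∧
    Tendsto Est (nhdsWithin 1 (Set.Ioi 0 \ {1}))
      (nhds (if Even (d - 1) then ((d : ℝ) * (d + 1)) / (d - 1)
             else ((d : ℝ) ^ 2) / (d - 1))) ∧
    (4 ≤ d → ¬ ∃ n : ℤ,
      (if Even (d - 1) then ((d : ℝ) * (d + 1)) / (d - 1)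
       else ((d : ℝ) ^ 2) / (d - 1)) = n) := by
  obtain ⟨b, c, hc, hdc, hbc, hc1, hL, hEq⟩ := stringyE_exists_qInt_ratio d hd P Est hP hEst
  have hden : ∀ t ∈ Ioi (0 : ℝ) \ {1}, (qInt c : ℝ[X]).eval t ≠ 0 :=
    fun t ht => (eval_qInt_pos ht.1 hc).ne'
  have hs : (Ioi (0 : ℝ) \ {1}).Infinite := (Ioi_infinite 0).sdiff (finite_singleton 1)
  rw [hL]
  refine ⟨?_, ?_, fun hd4 ⟨n, hn⟩ => natCast_mul_div_ne_intCast (by omega) hdc hbc n hn⟩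
  · rw [← hc1, ← qInt_dvd_mul_iff (R := ℝ) hc hdc hbc, ← exists_eqOn_eval_iff_dvd hs hden hEq]
    simp only [EqOn, Set.mem_sdiff, mem_Ioi, mem_singleton_iff, and_imp]
  · simpa using tendsto_nhdsWithin_of_eqOn_div (eval_qInt_pos one_pos hc).ne' hEq
end

section
/- The rational function $((t^3 - 1) + (t+1)t\cdot\frac{t-1}{t^2-1} + t^2\cdot\frac{t-1}{t^3-1} + (t+1)\cdot\frac{(t-1)^2}{(t^2-1)(t^3-1)})$ equals $t^2\,\frac{t^3 + t^2 + 2t + 1}{t^2+t+1}$, and its limit as $t \to 1$ equals $5/3$; in particular it is not a polynomial in $t$. -/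
open Filter Polynomial

lemma key_ne (t : ℝ) (ht : 0 < t) (hne : t ≠ 1) :
    t ^ 2 - 1 ≠ 0 ∧ t ^ 3 - 1 ≠ 0 ∧ t ^ 2 + t + 1 ≠ 0 := by
  have h1 : t - 1 ≠ 0 := sub_ne_zero.mpr hne
  have h2 : t + 1 ≠ 0 := by positivity
  have h3 : t ^ 2 + t + 1 ≠ 0 := by positivity
  refine ⟨?_, ?_, h3⟩
  · intro h; apply h1
    have h' : (t - 1) * (t + 1) = 0 := by nlinarith
    rcases mul_eq_zero.mp h' with h'' | h''
    · exact h''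
    · exact absurd h'' h2
  · intro h; apply h1; have : (t - 1) * (t ^ 2 + t + 1) = 0 := by nlinarith
    rcases mul_eq_zero.mp this with h | h
    · exact h
    · exact absurd h h3

lemma key_id (t : ℝ) (ht : 0 < t) (hne : t ≠ 1) :
    (t ^ 3 - 1) + (t + 1) * t * ((t - 1) / (t ^ 2 - 1)) +
        t ^ 2 * ((t - 1) / (t ^ 3 - 1)) +
        (t + 1) * ((t - 1) ^ 2 / ((t ^ 2 - 1) * (t ^ 3 - 1)))
      = t ^ 2 * (t ^ 3 + t ^ 2 + 2 * t + 1) / (t ^ 2 + t + 1) := by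
  obtain ⟨ha, hb, hc⟩ := key_ne t ht hne
  have h1 : t - 1 ≠ 0 := sub_ne_zero.mpr hne
  have h2 : t + 1 ≠ 0 := by positivity
  have e2 : t ^ 2 - 1 = (t - 1) * (t + 1) := by ring
  have e3 : t ^ 3 - 1 = (t - 1) * (t ^ 2 + t + 1) := by ring
  rw [e2, e3]
  field_simp
  ring

/-- The stringy E-function (with `t = uv`) of the 3-fold `x²+y²+z²+w³=0`:
`(t³-1) + (t+1)t·(t-1)/(t²-1) + t²·(t-1)/(t³-1) + (t+1)·(t-1)²/((t²-1)(t³-1))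
 = t²(t³+t²+2t+1)/(t²+t+1)`, its limit at `t → 1` is `5/3`, and it is not
a polynomial in `t`. -/
theorem stmt8 :
    (∀ t : ℝ, 0 < t → t ≠ 1 →
      (t ^ 3 - 1) + (t + 1) * t * ((t - 1) / (t ^ 2 - 1)) +
          t ^ 2 * ((t - 1) / (t ^ 3 - 1)) +
          (t + 1) * ((t - 1) ^ 2 / ((t ^ 2 - 1) * (t ^ 3 - 1)))
        = t ^ 2 * (t ^ 3 + t ^ 2 + 2 * t + 1) / (t ^ 2 + t + 1)) ∧
    Tendsto (fun t : ℝ => t ^ 2 * (t ^ 3 + t ^ 2 + 2 * t + 1) / (t ^ 2 + t + 1))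
      (nhdsWithin 1 {t : ℝ | t ≠ 1}) (nhds (5 / 3)) ∧
    ¬ ∃ p : Polynomial ℝ, ∀ t : ℝ, 0 < t → t ≠ 1 →
        (t ^ 3 - 1) + (t + 1) * t * ((t - 1) / (t ^ 2 - 1)) +
            t ^ 2 * ((t - 1) / (t ^ 3 - 1)) +
            (t + 1) * ((t - 1) ^ 2 / ((t ^ 2 - 1) * (t ^ 3 - 1)))
          = p.eval t := by
  refine ⟨key_id, ?_, ?_⟩
  · have hc : ContinuousAt
        (fun t : ℝ => t ^ 2 * (t ^ 3 + t ^ 2 + 2 * t + 1) / (t ^ 2 + t + 1)) 1 := by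
      apply ContinuousAt.div
      · fun_prop
      · fun_prop
      · norm_num
    have h15 : (1:ℝ) ^ 2 * ((1:ℝ) ^ 3 + 1 ^ 2 + 2 * 1 + 1) / (1 ^ 2 + 1 + 1) = 5 / 3 := by
      norm_num
    have := hc.continuousWithinAt (s := {t : ℝ | t ≠ 1})
    rw [ContinuousWithinAt] at this
    convert this using 2
    norm_num
  · rintro ⟨p, hp⟩
    set q : ℝ[X] := p * (X ^ 2 + X + 1) - (X ^ 5 + X ^ 4 + 2 * X ^ 3 + X ^ 2) with hq
    have hq0 : q = 0 := by
      apply Polynomial.eq_zero_of_infinite_isRoot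
      apply Set.Infinite.mono (s := Set.Ioi (1:ℝ))
      · intro t ht
        have ht1 : (1:ℝ) < t := ht
        have ht0 : 0 < t := by linarith
        have htne : t ≠ 1 := by linarith
        obtain ⟨ha, hb, hc⟩ := key_ne t ht0 htne
        have hpt : p.eval t = t ^ 2 * (t ^ 3 + t ^ 2 + 2 * t + 1) / (t ^ 2 + t + 1) := by
          rw [← hp t ht0 htne, key_id t ht0 htne]
        show q.IsRoot t
        simp only [Polynomial.IsRoot, hq, Polynomial.eval_sub, Polynomial.eval_mul,
          Polynomial.eval_add, Polynomial.eval_pow, Polynomial.eval_X,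
          Polynomial.eval_one, Polynomial.eval_ofNat]
        rw [hpt]
        field_simp
        ring
      · exact Set.Ioi_infinite 1
    have heq : p * (X ^ 2 + X + 1) = (X ^ 5 + X ^ 4 + 2 * X ^ 3 + X ^ 2 : ℝ[X]) :=
      sub_eq_zero.mp hq0
    -- evaluate at a complex primitive cube root of unity
    set s : ℝ := Real.sqrt 3 with hs
    have hs2 : (s:ℂ) ^ 2 = 3 := by
      norm_cast
      rw [hs, Real.sq_sqrt]; norm_num
    set ω : ℂ := -1/2 + (s/2 : ℝ) * Complex.I with hω
    have hroot : ω ^ 2 + ω + 1 = 0 := by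
      rw [hω]
      push_cast
      linear_combination ((s:ℂ)^2/4) * Complex.I_sq - (1/4 : ℂ) * hs2
    have := congrArg (Polynomial.aeval ω) heq
    simp only [map_mul, map_add, map_pow, Polynomial.aeval_X, Polynomial.aeval_one,
      map_ofNat] at this
    rw [hroot, mul_zero] at this
    have hval : ω ^ 5 + ω ^ 4 + 2 * ω ^ 3 + ω ^ 2 = -ω := by
      linear_combination (ω ^ 3 + ω) * hroot
    rw [hval] at this
    have hωne : ω ≠ 0 := by
      intro h
      have : (ω.im : ℝ) = 0 := by rw [h]; simp
      rw [hω] at this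
      simp at this
      have : (0:ℝ) < s := Real.sqrt_pos.mpr (by norm_num)
      nlinarith [this]
    exact hωne (neg_eq_zero.mp this.symm)
end

section
/- Let $N$ be a free abelian group of rank $d$, let $\sigma \subset N_\mathbb{R}$ be a $d$-dimensional simplicial cone generated by primitive lattice vectors $e_1,\dots,e_d$, and let $\varphi$ be the linear function on $\sigma$ with $\varphi(e_i) = 1$ for all $i$. Then $\lim_{t \to 1^-} (1-t)^d \sum_{n \in \sigma^\circ \cap N} t^{\varphi(n)}$ exists and equals $vol(\sigma)$, the index in $N$ of the subgroup generated by $e_1,\dots,e_d$. -/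
/-!
Every lattice point `n` of the open cone `σ°` is uniquely `r + ∑ mᵢ eᵢ` with `mᵢ ∈ ℕ` and `r` a
lattice point of the half-open parallelotope `{∑ λᵢ eᵢ : 0 < λᵢ ≤ 1}`, and `φ(n) = φ(r) + ∑ mᵢ`.
Hence the series factors as `(1 - t)⁻ᵈ ∑_r t^{φ(r)}`, and `(1 - t)ᵈ` times it tends to the number
of such `r`. These points form a system of representatives of `N / ⊕ ℤeᵢ`, whose order is
`|det e|` by the Smith normal form.
-/

open Filter ENNReal

theorem ENNReal.tsum_pow_sum_fin (u : ℝ≥0∞) (d : ℕ) :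
    ∑' m : Fin d → ℕ, u ^ (∑ i, m i) = (1 - u)⁻¹ ^ d := by
  induction d with
  | zero => simp
  | succ d ih =>
    rw [← (Fin.consEquiv fun _ => ℕ).tsum_eq]
    simp only [Fin.consEquiv, Equiv.coe_fn_mk, Fin.sum_cons, pow_add, pow_succ']
    rw [ENNReal.tsum_prod']
    simp_rw [ENNReal.tsum_mul_left, ih, ENNReal.tsum_mul_right, ENNReal.tsum_geometric]

theorem ENNReal.tsum_pow_sum {ι : Type*} [Fintype ι] (u : ℝ≥0∞) :
    ∑' m : ι → ℕ, u ^ (∑ i, m i) = (1 - u)⁻¹ ^ Fintype.card ι := by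
  let σ := Fintype.equivFin ι
  rw [← ENNReal.tsum_pow_sum_fin, ← (σ.arrowCongr (Equiv.refl ℕ)).tsum_eq]
  congr! 2 with m
  exact congrArg (u ^ ·) (σ.symm.sum_comp m).symm

theorem Real.tsum_rpow_eq_toReal {α : Type*} {t : ℝ} (ht : 0 < t) (f : α → ℝ) :
    ∑' a, t ^ f a = (∑' a, ENNReal.ofReal t ^ f a).toReal := by
  simp_rw [ENNReal.ofReal_rpow_of_pos ht]
  rw [ENNReal.tsum_toReal_eq fun _ => ENNReal.ofReal_ne_top]
  simp_rw [ENNReal.toReal_ofReal (Real.rpow_nonneg ht.le _)]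

theorem tendsto_tsum_rpow_nhds_one {R : Type*} [Finite R] (s : R → ℝ) :
    Tendsto (fun t : ℝ => ∑' r, t ^ s r) (nhds 1) (nhds (Nat.card R)) := by
  cases nonempty_fintype R
  simp_rw [tsum_fintype]
  have := tendsto_finsetSum Finset.univ fun r _ =>
    (Real.continuousAt_rpow_const 1 (s r) (Or.inl one_ne_zero)).tendsto
  simpa [Nat.card_eq_fintype_card] using this

namespace SimplicialCone

variable {ι : Type*} {e : ι → ι → ℤ} {c : (ι → ℤ) → ι → ℝ}

theorem linearIndependent_int_of_real (hind : LinearIndependent ℝ fun i j => (e i j : ℝ)) :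
    LinearIndependent ℤ e :=
  (hind.restrict_scalars' ℤ).of_comp ((Int.castAddHom ℝ).toIntLinearMap.compLeft ι)

def parallelotopePoints (c : (ι → ℤ) → ι → ℝ) : Set (ι → ℤ) :=
  {r | ∀ i, c r i ∈ Set.Ioc 0 1}

theorem ceil_coord_eq_one {r : ι → ℤ} (hr : r ∈ parallelotopePoints c) (i : ι) :
    ⌈c r i⌉ = 1 := by
  rw [Int.ceil_eq_iff]
  exact ⟨by simpa using (hr i).1, by simpa using (hr i).2⟩

variable [Fintype ι]

def CoordsEquivariant (e : ι → ι → ℤ) (c : (ι → ℤ) → ι → ℝ) : Prop :=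
  ∀ n m : ι → ℤ, c (n + ∑ i, m i • e i) = c n + fun i => (m i : ℝ)

theorem coordsEquivariant_of_linearIndependent
    (hind : LinearIndependent ℝ fun i j => (e i j : ℝ))
    (hc : ∀ n : ι → ℤ, ∑ i, c n i • (fun j => (e i j : ℝ)) = fun j => (n j : ℝ)) :
    CoordsEquivariant e c := by
  intro n m
  funext k
  refine Fintype.linearIndependent_iffₛ.mp hind _ _ ?_ k
  funext j
  have hn : ∑ i, c n i * e i j = n j := by simpa [Finset.sum_apply] using congrFun (hc n) j
  rw [hc]
  simp only [Pi.add_apply, Finset.sum_apply, Pi.smul_apply, smul_eq_mul, add_mul,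
    Finset.sum_add_distrib, hn]
  push_cast
  rfl

theorem intCast_det_of [DecidableEq ι] :
    ((Matrix.of e).det : ℝ) = (Matrix.of fun i j => (e i j : ℝ)).det :=
  (Int.castRingHom ℝ).map_det _

theorem det_ne_zero_of_linearIndependent [DecidableEq ι]
    (hind : LinearIndependent ℝ fun i j => (e i j : ℝ)) :
    (Matrix.of e).det ≠ 0 := by
  have : IsUnit (Matrix.of fun i j => (e i j : ℝ)) :=
    Matrix.linearIndependent_rows_iff_isUnit.mp hind
  rw [Matrix.isUnit_iff_isUnit_det, isUnit_iff_ne_zero, ← intCast_det_of] at this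
  exact_mod_cast this

theorem coord_sub_sum_smul (hc : CoordsEquivariant e c) (n m : ι → ℤ) :
    c (n - ∑ i, m i • e i) = c n - fun i => (m i : ℝ) := by
  rw [eq_sub_iff_add_eq, ← hc, sub_add_cancel]

theorem ceil_coord_add_sum_smul (hc : CoordsEquivariant e c) {r : ι → ℤ}
    (hr : r ∈ parallelotopePoints c) (m : ι → ℤ) (i : ι) :
    ⌈c (r + ∑ i, m i • e i) i⌉ = m i + 1 := by
  rw [hc, Pi.add_apply, Int.ceil_add_intCast, ceil_coord_eq_one hr, add_comm]

theorem sub_sum_ceil_smul_mem (hc : CoordsEquivariant e c) (n : ι → ℤ) :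
    n - ∑ i, (⌈c n i⌉ - 1) • e i ∈ parallelotopePoints c := by
  intro i
  rw [coord_sub_sum_smul hc, Pi.sub_apply, Int.cast_sub, Int.cast_one]
  constructor <;> linarith [Int.le_ceil (c n i), Int.ceil_lt_add_one (c n i)]

theorem eq_of_mem_parallelotopePoints (hc : CoordsEquivariant e c) {r r' : ι → ℤ}
    (hr : r ∈ parallelotopePoints c) (hr' : r' ∈ parallelotopePoints c)
    (h : r - r' ∈ Submodule.span ℤ (Set.range e)) : r = r' := by
  obtain ⟨m, hm⟩ := (Submodule.mem_span_range_iff_exists_fun ℤ).mp h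
  have hm0 : m = 0 := funext fun i => by
    have := ceil_coord_add_sum_smul hc hr' m i
    rw [hm, add_sub_cancel, ceil_coord_eq_one hr] at this
    rw [Pi.zero_apply]
    omega
  rw [← sub_eq_zero, ← hm, hm0]
  simp

noncomputable def parallelotopeEquivQuotient (hc : CoordsEquivariant e c) :
    parallelotopePoints c ≃ (ι → ℤ) ⧸ Submodule.span ℤ (Set.range e) :=
  Equiv.ofBijective (fun r => Submodule.Quotient.mk r.1) <| by
    refine ⟨fun r r' h => Subtype.ext ?_, fun q => ?_⟩
    · exact eq_of_mem_parallelotopePoints hc r.2 r'.2 ((Submodule.Quotient.eq _).mp h)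
    · obtain ⟨n, rfl⟩ := Submodule.Quotient.mk_surjective _ q
      refine ⟨⟨_, sub_sum_ceil_smul_mem hc n⟩, (Submodule.Quotient.eq _).mpr ?_⟩
      rw [sub_sub_cancel_left]
      exact neg_mem (Submodule.sum_mem _ fun i _ =>
        Submodule.smul_mem _ _ (Submodule.subset_span ⟨i, rfl⟩))

theorem nat_card_parallelotopePoints [DecidableEq ι] (hc : CoordsEquivariant e c)
    (he : LinearIndependent ℤ e) :
    Nat.card (parallelotopePoints c) = (Matrix.of e).det.natAbs := by
  rw [Nat.card_congr (parallelotopeEquivQuotient hc),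
    ← Submodule.natAbs_det_basis_change (Pi.basisFun ℤ ι) _ (Module.Basis.span he)]
  have hspan : ((↑) ∘ Module.Basis.span he) = e :=
    funext fun i => by simp [Module.Basis.span_apply]
  rw [hspan, Pi.basisFun_det]
  rfl

noncomputable def interiorEquiv (hc : CoordsEquivariant e c) :
    (ι → ℕ) × parallelotopePoints c ≃ {n : ι → ℤ // ∀ i, 0 < c n i} where
  toFun p := ⟨p.2 + ∑ i, (p.1 i : ℤ) • e i, fun i => by
    rw [hc, Pi.add_apply]
    exact add_pos_of_pos_of_nonneg (p.2.2 i).1 (by positivity)⟩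
  invFun n := (fun i => (⌈c n.1 i⌉ - 1).toNat, ⟨_, sub_sum_ceil_smul_mem hc n.1⟩)
  left_inv := by
    rintro ⟨m, r, hr⟩
    have hceil : ∀ i, ⌈c (r + ∑ i, (m i : ℤ) • e i) i⌉ - 1 = m i := fun i => by
      rw [ceil_coord_add_sum_smul hc hr, add_sub_cancel_right]
    refine Prod.ext (funext fun i => ?_) (Subtype.ext ?_)
    · show (⌈c (r + ∑ i, (m i : ℤ) • e i) i⌉ - 1).toNat = m i
      rw [hceil, Int.toNat_natCast]
    · show r + ∑ i, (m i : ℤ) • e i - ∑ i, (⌈c (r + ∑ i, (m i : ℤ) • e i) i⌉ - 1) • e i = r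
      simp only [hceil, add_sub_cancel_right]
  right_inv := by
    rintro ⟨n, hn⟩
    have hceil : ∀ i, ((⌈c n i⌉ - 1).toNat : ℤ) = ⌈c n i⌉ - 1 := fun i =>
      Int.toNat_of_nonneg (sub_nonneg.mpr (Int.one_le_ceil_iff.mpr (hn i)))
    ext1
    simp only [hceil, sub_add_cancel]

theorem sum_coord_interiorEquiv (hc : CoordsEquivariant e c)
    (p : (ι → ℕ) × parallelotopePoints c) :
    ∑ i, c (interiorEquiv hc p).1 i = (∑ i, p.1 i : ℕ) + ∑ i, c p.2.1 i := by
  show ∑ i, c (p.2.1 + ∑ i, (p.1 i : ℤ) • e i) i = _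
  rw [hc]
  simp [Finset.sum_add_distrib, add_comm]

theorem tsum_rpow_interior_eq (hc : CoordsEquivariant e c) {u : ℝ≥0∞} (hu0 : u ≠ 0)
    (hutop : u ≠ ⊤) :
    ∑' n : {n : ι → ℤ // ∀ i, 0 < c n i}, u ^ ∑ i, c n.1 i =
      (1 - u)⁻¹ ^ Fintype.card ι * ∑' r : parallelotopePoints c, u ^ ∑ i, c r.1 i := by
  rw [← (interiorEquiv hc).tsum_eq]
  simp_rw [sum_coord_interiorEquiv, ENNReal.rpow_add _ _ hu0 hutop, ENNReal.rpow_natCast]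
  rw [ENNReal.tsum_prod']
  simp_rw [ENNReal.tsum_mul_left, ENNReal.tsum_mul_right, ENNReal.tsum_pow_sum]

theorem one_sub_pow_mul_tsum_rpow_interior (hc : CoordsEquivariant e c) {t : ℝ}
    (ht : t ∈ Set.Ioo 0 1) :
    (1 - t) ^ Fintype.card ι * ∑' n : {n : ι → ℤ // ∀ i, 0 < c n i}, t ^ ∑ i, c n.1 i =
      ∑' r : parallelotopePoints c, t ^ ∑ i, c r.1 i := by
  have hu0 : ENNReal.ofReal t ≠ 0 := (ENNReal.ofReal_pos.mpr ht.1).ne'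
  have h1u : (1 - ENNReal.ofReal t).toReal = 1 - t := by
    rw [← ENNReal.ofReal_one, ← ENNReal.ofReal_sub _ ht.1.le,
      ENNReal.toReal_ofReal (by linarith [ht.2])]
  rw [Real.tsum_rpow_eq_toReal ht.1, Real.tsum_rpow_eq_toReal ht.1,
    tsum_rpow_interior_eq hc hu0 ENNReal.ofReal_ne_top, ENNReal.toReal_mul, ENNReal.toReal_pow,
    ENNReal.toReal_inv, h1u, ← mul_assoc, ← mul_pow, mul_inv_cancel₀ (sub_pos.mpr ht.2).ne',
    one_pow, one_mul]

end SimplicialCone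

open SimplicialCone

theorem stmt9_general (d : ℕ) (e : Fin d → (Fin d → ℤ))
    (hind : LinearIndependent ℝ (fun i => (fun j => (e i j : ℝ))))
    (c : (Fin d → ℤ) → (Fin d → ℝ))
    (hc : ∀ n : Fin d → ℤ,
      (∑ i, c n i • (fun j => (e i j : ℝ))) = fun j => (n j : ℝ)) :
    Tendsto
      (fun t : ℝ => (1 - t) ^ d *
        ∑' n : {n : Fin d → ℤ // ∀ i, 0 < c n i}, t ^ (∑ i, c n.1 i))
      (nhdsWithin 1 (Set.Ioo 0 1))
      (nhds |(Matrix.of fun i j => ((e i j : ℤ) : ℝ)).det|) := by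
  have hce : CoordsEquivariant e c := coordsEquivariant_of_linearIndependent hind hc
  have hcard := nat_card_parallelotopePoints hce (linearIndependent_int_of_real hind)
  have : Finite (parallelotopePoints c) := Nat.finite_of_card_ne_zero <| by
    rw [hcard]
    exact Int.natAbs_ne_zero.mpr (det_ne_zero_of_linearIndependent hind)
  have hlim := (tendsto_tsum_rpow_nhds_one fun r : parallelotopePoints c => ∑ i, c r.1 i).mono_left
    (nhdsWithin_le_nhds (s := Set.Ioo 0 1))
  rw [hcard, Nat.cast_natAbs, Int.cast_abs, intCast_det_of] at hlim
  refine hlim.congr' ?_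
  filter_upwards [self_mem_nhdsWithin] with t ht
  simpa using (one_sub_pow_mul_tsum_rpow_interior hce ht).symm

/-- For a `d`-dimensional simplicial cone `σ` generated by primitive lattice vectors
`e₁,…,e_d` and `φ` linear with `φ(eᵢ) = 1` (so `φ(n) = ∑ cᵢ` in coordinates `c`),
`lim_{t→1⁻} (1-t)^d ∑_{n ∈ σ°∩N} t^{φ(n)} = vol(σ) = [N : ℤe₁+⋯+ℤe_d] = |det(e)|`. -/
theorem stmt9 (d : ℕ) (hd : 0 < d) (e : Fin d → (Fin d → ℤ))
    (hind : LinearIndependent ℝ (fun i => (fun j => (e i j : ℝ))))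
    (hprim : ∀ i, ¬ ∃ (m : Fin d → ℤ) (k : ℤ), 1 < k ∧ e i = k • m)
    (c : (Fin d → ℤ) → (Fin d → ℝ))
    (hc : ∀ n : Fin d → ℤ,
      (∑ i, c n i • (fun j => (e i j : ℝ))) = fun j => (n j : ℝ)) :
    Tendsto
      (fun t : ℝ => (1 - t) ^ d *
        ∑' n : {n : Fin d → ℤ // ∀ i, 0 < c n i}, t ^ (∑ i, c n.1 i))
      (nhdsWithin 1 (Set.Ioo 0 1))
      (nhds |(Matrix.of fun i j => ((e i j : ℤ) : ℝ)).det|) :=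
  stmt9_general d e hind c hc
end

section
/- Let $X$ be a smooth quasi-projective variety over $\mathbb{C}$ of dimension $n$ and let $J_\infty(X) = \varprojlim J_l(X)$ be the arc space with truncation maps $\pi_l : J_\infty(X) \to J_l(X)$, where each $j_l : J_{l+1}(X) \to J_l(X)$ is a Zariski locally trivial $\mathbb{C}^n$-bundle. Define a cylinder set as a preimage $\pi_l^{-1}(B)$ of a constructible set $B \subseteq J_l(X)$. If a cylinder set $C$ is contained in a countable union $\bigcup_{i=1}^{\infty} C_i$ of cylinder sets, then there is a positive integer $m$ with $C \subseteq \bigcup_{i=1}^{m} C_i$. -/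
/-- A Zariski locally closed subset of affine space `ℂ^ι`: common zeros of a finite
set of polynomials minus the zero set of another polynomial. -/
def IsAffineLocallyClosed {ι : Type} [Fintype ι] (s : Set (ι → ℂ)) : Prop :=
  ∃ (P : Finset (MvPolynomial ι ℂ)) (q : MvPolynomial ι ℂ),
    s = {x | (∀ p ∈ P, MvPolynomial.eval x p = 0) ∧ MvPolynomial.eval x q ≠ 0}

/-- A constructible subset of `ℂ^ι`: a finite union of locally closed subsets. -/
def IsAffineConstructible {ι : Type} [Fintype ι] (s : Set (ι → ℂ)) : Prop :=
  ∃ S : Finset (Set (ι → ℂ)), (∀ u ∈ S, IsAffineLocallyClosed u) ∧ s = ⋃ u ∈ S, u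

/-- The truncation map `π_l : J_∞(𝔸ⁿ) → J_l(𝔸ⁿ)`, sending an arc (an `n`-tuple of
formal power series) to its coefficients up to order `l`. -/
noncomputable def arcTrunc (n l : ℕ) (y : Fin n → PowerSeries ℂ) : Fin n × Fin (l + 1) → ℂ :=
  fun p => PowerSeries.coeff (p.2 : ℕ) (y p.1)

/-- A cylinder set in the arc space `J_∞(𝔸ⁿ)`: the preimage under some truncation
`π_l` of a constructible subset of `J_l(𝔸ⁿ)`. -/
def IsCylinderSet (n : ℕ) (C : Set (Fin n → PowerSeries ℂ)) : Prop :=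
  ∃ (l : ℕ) (B : Set (Fin n × Fin (l + 1) → ℂ)),
    IsAffineConstructible B ∧ C = arcTrunc n l ⁻¹' B

/-!
Instead of Chevalley's theorem, the argument uses an ultrapower of `ℂ`. If no finite subunion
covers `C`, pick arcs `y k ∈ C` avoiding `C 0, …, C k` and a nonprincipal ultrafilter `U` on `ℕ`.
The coefficients of the `y k` generate a countable subfield of the ultrapower `ℂ^ℕ / U`, and it
embeds into `ℂ` over the countable field generated by the coefficients of all defining polynomials,
since `ℂ` has uncountable transcendence degree over it. The image of the coefficients is an arc `Y`
satisfying exactly those polynomial conditions that hold for `U`-almost all `y k` (Łoś's theorem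
for constructible sets), so `Y ∈ C` while `Y ∉ C i` for every `i`.
-/

open MvPolynomial Filter

theorem nonempty_algHom_complex_of_countable (F M : Type*) [Field F] [Field M] [Algebra F M]
    [Algebra F ℂ] [Countable M] : Nonempty (M →ₐ[F] ℂ) := by
  obtain ⟨s, hs⟩ := exists_isTranscendenceBasis F M
  obtain ⟨t, ht⟩ := exists_isTranscendenceBasis F ℂ
  have : Countable F := (algebraMap F M).injective.countable
  have : Uncountable t := by
    have h := IsAlgClosed.cardinal_eq_cardinal_transcendence_basis_of_aleph0_lt _ ht
      Cardinal.mk_le_aleph0 (Cardinal.mk_complex ▸ Cardinal.aleph0_lt_continuum)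
    rw [← Cardinal.aleph0_lt_mk_iff]
    simp only [Cardinal.lift_id, Cardinal.mk_complex] at h
    exact h ▸ Cardinal.aleph0_lt_continuum
  -- map the polynomial ring on `s` into `ℂ` along an injection `s ↪ t`, then extend to the
  -- algebraic extension `M` of it
  obtain ⟨f, hf⟩ := Countable.exists_injective_nat s
  let e : s ↪ t := ⟨Infinite.natEmbedding t ∘ f, (Infinite.natEmbedding t).injective.comp hf⟩
  let R := Algebra.adjoin F (Set.range ((↑) : s → M))
  let φ : R →ₐ[F] ℂ := (aeval ((↑) ∘ e)).comp hs.1.repr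
  have hφ : Function.Injective φ :=
    (algebraicIndependent_iff_injective_aeval.mp (ht.1.comp e e.injective)).comp
      hs.1.aevalEquiv.symm.injective
  let : Algebra R ℂ := φ.toAlgebra
  have : IsScalarTower F R ℂ := .of_algebraMap_eq fun a => (φ.commutes a).symm
  have : FaithfulSMul R ℂ := (faithfulSMul_iff_algebraMap_injective R ℂ).mpr hφ
  have : Algebra.IsAlgebraic R M := hs.isAlgebraic
  exact ⟨(IsAlgClosed.lift : M →ₐ[R] ℂ).restrictScalars F⟩

theorem exists_forall_aeval_eq_zero_iff_eventually {α ι F : Type*} [Countable ι] [Field F]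
    [Countable F] [Algebra F ℂ] (U : Ultrafilter α) (x : α → ι → ℂ) :
    ∃ z : ι → ℂ, ∀ p : MvPolynomial ι F, aeval z p = 0 ↔ ∀ᶠ k in U, aeval (x k) p = 0 := by
  let : Algebra F ((U : Filter α).Germ ℂ) :=
    ((Germ.coeRingHom (U : Filter α)).comp (algebraMap F (α → ℂ))).toAlgebra
  let germ : (α → ℂ) →ₐ[F] (U : Filter α).Germ ℂ :=
    { Germ.coeRingHom (U : Filter α) with commutes' := fun _ => rfl }
  let g : ι → (U : Filter α).Germ ℂ := fun i => germ fun k => x k i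
  let M := IntermediateField.adjoin F (Set.range g)
  have : Countable M := by
    rw [← Cardinal.mk_le_aleph0_iff, ← Cardinal.lift_le_aleph0]
    refine (IntermediateField.lift_cardinalMk_adjoin_le F _).trans ?_
    simp only [Cardinal.lift_le_aleph0, sup_le_iff, Cardinal.mk_le_aleph0, le_refl, and_true,
      true_and]
    exact Cardinal.mk_le_aleph0_iff.mpr (Set.countable_range g).to_subtype
  obtain ⟨σ⟩ := nonempty_algHom_complex_of_countable F M
  let gM : ι → M := fun i => ⟨g i, IntermediateField.subset_adjoin F _ ⟨i, rfl⟩⟩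
  refine ⟨fun i => σ (gM i), fun p => ?_⟩
  calc aeval (fun i => σ (gM i)) p = 0 ↔ aeval gM p = 0 := by
        rw [← comp_aeval_apply, map_eq_zero_iff σ σ.toRingHom.injective]
    _ ↔ aeval g p = 0 := by
        rw [← ZeroMemClass.coe_eq_zero, ← IntermediateField.coe_val, comp_aeval_apply]
        rfl
    _ ↔ germ (fun k => aeval (x k) p) = 0 := by
        have hpi : (fun k => aeval (x k) p) = aeval (fun i k => x k i) p := by
          funext k
          exact (comp_aeval_apply (fun i k => x k i) (Pi.evalAlgHom F (fun _ : α => ℂ) k) p).symm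
        rw [hpi, comp_aeval_apply]
    _ ↔ ∀ᶠ k in U, aeval (x k) p = 0 := Germ.coe_eq

theorem exists_forall_eval_eq_zero_iff_eventually {α ι : Type*} [Countable ι]
    (U : Ultrafilter α) (x : α → ι → ℂ) {P : Set (MvPolynomial ι ℂ)} (hP : P.Countable) :
    ∃ z : ι → ℂ, ∀ p ∈ P, eval z p = 0 ↔ ∀ᶠ k in U, eval (x k) p = 0 := by
  let F := Subfield.closure (⋃ p ∈ P, (p.coeffs : Set ℂ))
  have : Countable F := by
    rw [← Cardinal.mk_le_aleph0_iff]
    refine (Subfield.cardinalMk_closure_le_max _).trans (max_le ?_ le_rfl)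
    exact Cardinal.mk_le_aleph0_iff.mpr
      (hP.biUnion fun p _ => p.coeffs.countable_toSet).to_subtype
  obtain ⟨z, hz⟩ := exists_forall_aeval_eq_zero_iff_eventually (F := F) U x
  refine ⟨z, fun p hp => ?_⟩
  obtain ⟨p₀, rfl⟩ : p ∈ Set.range (MvPolynomial.map F.subtype) := by
    rw [mem_range_map_iff_coeffs_subset, Subfield.coe_subtype, Subtype.range_coe]
    exact fun c hc => Subfield.subset_closure (Set.mem_biUnion hp hc)
  simp only [eval_map]
  exact hz p₀

theorem forall_eval_eq_zero_and_ne_iff_eventually {α ι : Type*} {U : Ultrafilter α}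
    {z : ι → ℂ} {x : α → ι → ℂ} {P : Finset (MvPolynomial ι ℂ)} {q : MvPolynomial ι ℂ}
    (hP : ∀ p ∈ P, eval z p = 0 ↔ ∀ᶠ k in U, eval (x k) p = 0)
    (hq : eval z q = 0 ↔ ∀ᶠ k in U, eval (x k) q = 0) :
    ((∀ p ∈ P, eval z p = 0) ∧ eval z q ≠ 0) ↔
      ∀ᶠ k in U, (∀ p ∈ P, eval (x k) p = 0) ∧ eval (x k) q ≠ 0 := by
  rw [eventually_and, eventually_all_finset, Ne, Ultrafilter.eventually_not, ← hq]
  exact and_congr_left' (forall₂_congr hP)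

theorem IsAffineConstructible.exists_finset_mem_iff_eventually_mem {ι : Type} [Fintype ι]
    (α : Type*) {s : Set (ι → ℂ)} (hs : IsAffineConstructible s) :
    ∃ P : Finset (MvPolynomial ι ℂ), ∀ (U : Ultrafilter α) (z : ι → ℂ) (x : α → ι → ℂ),
      (∀ p ∈ P, eval z p = 0 ↔ ∀ᶠ k in U, eval (x k) p = 0) →
        (z ∈ s ↔ ∀ᶠ k in U, x k ∈ s) := by
  classical
  obtain ⟨S, hS, rfl⟩ := hs
  choose! P q hPq using hS
  refine ⟨S.biUnion fun u => insert (q u) (P u), fun U z x h => ?_⟩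
  have hu : ∀ u ∈ S, z ∈ u ↔ ∀ᶠ k in U, x k ∈ u := fun u hu => by
    have hu' : ∀ p ∈ insert (q u) (P u), _ := fun p hp => h p (Finset.mem_biUnion.2 ⟨u, hu, hp⟩)
    rw [hPq u hu]
    exact forall_eval_eq_zero_and_ne_iff_eventually
      (fun p hp => hu' p (Finset.mem_insert_of_mem hp)) (hu' _ (Finset.mem_insert_self _ _))
  simp only [Set.mem_iUnion₂, exists_prop, ← Finset.mem_coe]
  rw [U.eventually_exists_mem_iff S.finite_toSet]
  exact exists_congr fun u => and_congr_right (hu u)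

theorem exists_arc_mem_iff_eventually_mem {n : ℕ} {J α : Type*} [Countable J]
    (U : Ultrafilter α) (y : α → Fin n → PowerSeries ℂ) (C : J → Set (Fin n → PowerSeries ℂ))
    (hC : ∀ j, IsCylinderSet n (C j)) :
    ∃ Y : Fin n → PowerSeries ℂ, ∀ j, Y ∈ C j ↔ ∀ᶠ k in U, y k ∈ C j := by
  choose l B hB hCB using hC
  choose P hP using fun j => (hB j).exists_finset_mem_iff_eventually_mem α
  -- an arc is the point of `ℂ^(Fin n × ℕ)` formed by its coefficients
  let x : α → Fin n × ℕ → ℂ := fun k ab => PowerSeries.coeff ab.2 (y k ab.1)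
  let e : ∀ l, Fin n × Fin (l + 1) → Fin n × ℕ := fun l => Prod.map id Fin.val
  obtain ⟨z, hz⟩ := exists_forall_eval_eq_zero_iff_eventually U x
    (P := ⋃ j, rename (e (l j)) '' (P j : Set (MvPolynomial _ ℂ)))
    (Set.countable_iUnion fun j => ((P j).finite_toSet.image _).countable)
  let Y : Fin n → PowerSeries ℂ := fun a => PowerSeries.mk fun b => z (a, b)
  have hY : ∀ l, arcTrunc n l Y = z ∘ e l := fun l => funext fun _ => PowerSeries.coeff_mk _ _
  refine ⟨Y, fun j => ?_⟩
  rw [hCB j, Set.mem_preimage, hY]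
  refine hP j U _ (fun k => x k ∘ e (l j)) fun p hp => ?_
  simpa only [eval_rename] using hz _ (Set.mem_iUnion.2 ⟨j, p, hp, rfl⟩)

/-- Compactness property of cylinder sets in arc spaces: a cylinder set contained
in a countable union of cylinder sets is contained in a finite subunion. -/
theorem stmt14 (n : ℕ) (C : Set (Fin n → PowerSeries ℂ))
    (Ci : ℕ → Set (Fin n → PowerSeries ℂ))
    (hC : IsCylinderSet n C) (hCi : ∀ i, IsCylinderSet n (Ci i))
    (hsub : C ⊆ ⋃ i, Ci i) :
    ∃ m : ℕ, C ⊆ ⋃ i ∈ Finset.range (m + 1), Ci i := by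
  by_contra! hfin
  choose y hyC hyCi using fun m => Set.not_subset.mp (hfin m)
  let U := Ultrafilter.of (atTop : Filter ℕ)
  obtain ⟨Y, hY⟩ := exists_arc_mem_iff_eventually_mem U y (fun j : Option ℕ => j.elim C Ci)
    (Option.rec hC hCi)
  obtain ⟨i, hYi⟩ := Set.mem_iUnion.mp (hsub ((hY none).mpr (.of_forall hyC)))
  have hyi : ∀ᶠ k in U, y k ∉ Ci i := Ultrafilter.of_le atTop <|
    eventually_ge_atTop i |>.mono fun k hik hk =>
      hyCi k (Set.mem_biUnion (Finset.mem_range_succ_iff.mpr hik) hk)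
  obtain ⟨k, hk, hk'⟩ := ((hY (some i)).mp hYi).and hyi |>.exists
  exact hk' hk
end

section
/- Let $I$ be a finite set, $a_j$ rational numbers with $a_j > -1$ for $j \in I$, and $E_J$ elements of $\mathbb{Q}(u,v)$ (or a field containing fractional powers of $uv$) for $J \subseteq I$, each satisfying $E_J(u^{-1},v^{-1}) = (uv)^{-(d - |J|)} E_J(u,v)$. Then the function $E_{st}(u,v) := \sum_{J\subseteq I} E_J(u,v) \prod_{j\in J} \frac{uv - (uv)^{a_j+1}}{(uv)^{a_j+1} - 1}$ satisfies $E_{st}(u,v) = (uv)^d\, E_{st}(u^{-1}, v^{-1})$. -/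
private lemma inv_factor (t s : ℝ) (ht : t ≠ 0) (hs : s ≠ 0) (hs1 : s ≠ 1) :
    (t⁻¹ - s⁻¹) / (s⁻¹ - 1) = t⁻¹ * ((t - s) / (s - 1)) := by
  have h1 : s - 1 ≠ 0 := sub_ne_zero.mpr hs1
  have h2 : s⁻¹ - 1 ≠ 0 := sub_ne_zero.mpr fun h => hs1 (inv_eq_one.mp h)
  rw [inv_mul_eq_div, div_div, div_eq_div_iff h2 (mul_ne_zero h1 ht)]
  linear_combination (s - 1) * mul_inv_cancel₀ ht + (1 - t) * mul_inv_cancel₀ hs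

/-- Algebraic core of Poincaré duality for stringy E-functions: if each closed
stratum value `E_J(u,v)` satisfies `E_J(u⁻¹,v⁻¹) = (uv)^{-(d-|J|)} E_J(u,v)`,
then `E_st(u,v) := ∑_J E_J(u,v) ∏_{j∈J} (uv-(uv)^{aⱼ+1})/((uv)^{aⱼ+1}-1)`
satisfies `E_st(u,v) = (uv)^d E_st(u⁻¹,v⁻¹)`. -/
theorem stmt18 {I : Type*} [Fintype I] (a : I → ℚ) (ha : ∀ j, -1 < a j)
    (d : ℕ) (E : Finset I → ℝ → ℝ → ℝ)
    (hdual : ∀ (J : Finset I) (u v : ℝ), 0 < u → 0 < v →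
      E J u⁻¹ v⁻¹ = (u * v) ^ (-(((d : ℝ) - J.card))) * E J u v)
    (u v : ℝ) (hu : 0 < u) (hv : 0 < v)
    (hne : ∀ j, (u * v) ^ ((a j : ℝ) + 1) ≠ 1) :
    ∑ J : Finset I, E J u v *
        ∏ j ∈ J, ((u * v) - (u * v) ^ ((a j : ℝ) + 1)) /
          ((u * v) ^ ((a j : ℝ) + 1) - 1)
      = (u * v) ^ d *
          ∑ J : Finset I, E J u⁻¹ v⁻¹ *
            ∏ j ∈ J, ((u⁻¹ * v⁻¹) - (u⁻¹ * v⁻¹) ^ ((a j : ℝ) + 1)) /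
              ((u⁻¹ * v⁻¹) ^ ((a j : ℝ) + 1) - 1) := by
  set t := u * v with ht'
  have ht : 0 < t := mul_pos hu hv
  have htne : t ≠ 0 := ht.ne'
  have hinv : u⁻¹ * v⁻¹ = t⁻¹ := (mul_inv u v).symm
  rw [Finset.mul_sum]
  refine Finset.sum_congr rfl fun J _ => ?_
  have key : ∀ j ∈ J,
      ((u⁻¹ * v⁻¹) - (u⁻¹ * v⁻¹) ^ ((a j : ℝ) + 1)) /
          ((u⁻¹ * v⁻¹) ^ ((a j : ℝ) + 1) - 1)
        = t⁻¹ * ((t - t ^ ((a j : ℝ) + 1)) / (t ^ ((a j : ℝ) + 1) - 1)) := by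
    intro j _
    have hs : (0:ℝ) < t ^ ((a j : ℝ) + 1) := Real.rpow_pos_of_pos ht _
    have hs1 : t ^ ((a j : ℝ) + 1) ≠ 1 := hne j
    have hs1' : t ^ ((a j : ℝ) + 1) - 1 ≠ 0 := sub_ne_zero.mpr hs1
    rw [hinv, Real.inv_rpow ht.le]
    exact inv_factor t _ htne hs.ne' hs1
  rw [Finset.prod_congr rfl key, Finset.prod_mul_distrib, Finset.prod_const,
    hdual J u v hu hv]
  have h1 : t ^ d * t ^ (-((d : ℝ) - J.card)) * (t⁻¹) ^ J.card = 1 := by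
    rw [← Real.rpow_natCast t d, ← Real.rpow_natCast t⁻¹ J.card, Real.inv_rpow ht.le,
      ← Real.rpow_neg ht.le, ← Real.rpow_add ht, ← Real.rpow_add ht,
      show (d : ℝ) + -((d : ℝ) - J.card) + -(J.card : ℝ) = 0 by ring, Real.rpow_zero]
  linear_combination (-(E J u v *
    ∏ j ∈ J, ((t - t ^ ((a j : ℝ) + 1)) / (t ^ ((a j : ℝ) + 1) - 1)))) * h1
end
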